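/- Let r ≥ 0 and λ₀ ∈ ℝ, and define the sequence G_n on E by G₀(ξ,η) := (λ₀/4)(ξ+η) and G_{n+1}(ξ,η) := (1/4)∫_η^ξ∫₀^η (λ₀ - rτs)G_n(τ,s) ds dτ + (1/2)∫₀^η∫₀^τ (λ₀ - rτs)G_n(τ,s) ds dτ. With M₁ := r + |λ₀|, for every n ∈ ℕ₀ and every (ξ,η) ∈ E one has |G_n(ξ,η)| ≤ (M₁^{n+1}/(n+1)!)·(ξ^{n+1}η^n + ξ^n η^{n+1}). -/

import Mathlib

open MeasureTheory intervalIntegral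

/-- The domain `E = {(ξ,η) : 0 ≤ η ≤ 1, η ≤ ξ ≤ 2-η}`. -/
def Eset : Set (ℝ × ℝ) := {q | 0 ≤ q.2 ∧ q.2 ≤ 1 ∧ q.2 ≤ q.1 ∧ q.1 ≤ 2 - q.2}

/-!
Write `W n τ s = τ^(n+1) s^n + τ^n s^(n+1)`. On `E` one has `0 ≤ τ s ≤ 1`, so `|λ₀ - r τ s| ≤ M₁`,
and every integration point of the recursion at a point of `E` lies again in `E`; hence the
integral operator of the recursion is monotone with respect to majorants on `E`. It maps `W n`
exactly to `W (n+1) / (4 (n+1) (n+2))` (the `η^(2n+3)` terms of its two halves cancel), and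
`(n+2)! ≤ 4 (n+1) (n+2) (n+1)!` closes the induction.
-/

open Set Function

lemma mem_Eset {τ s : ℝ} : (τ, s) ∈ Eset ↔ 0 ≤ s ∧ s ≤ 1 ∧ s ≤ τ ∧ τ ≤ 2 - s := Iff.rfl

lemma abs_integral_integral_le {f g : ℝ → ℝ → ℝ} (hg : Continuous (uncurry g))
    {a b c : ℝ} {d : ℝ → ℝ} (hd : Continuous d) (hab : a ≤ b)
    (hcd : ∀ τ ∈ Ioc a b, c ≤ d τ) (hfg : ∀ τ ∈ Ioc a b, ∀ s ∈ Ioc c (d τ), |f τ s| ≤ g τ s) :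
    |∫ τ in a..b, ∫ s in c..d τ, f τ s| ≤ ∫ τ in a..b, ∫ s in c..d τ, g τ s := by
  rw [← Real.norm_eq_abs]
  refine intervalIntegral.norm_integral_le_of_norm_le hab (ae_of_all _ fun τ hτ => ?_)
    ((continuous_parametric_intervalIntegral_of_continuous hg hd).intervalIntegrable
      (μ := volume) _ _)
  exact intervalIntegral.norm_integral_le_of_norm_le (hcd τ hτ) (ae_of_all _ (hfg τ hτ))
    ((hg.comp (Continuous.prodMk_right τ)).intervalIntegrable (μ := volume) _ _)

noncomputable def picardOp (K : ℝ → ℝ → ℝ) (ξ η : ℝ) : ℝ :=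
  1 / 4 * (∫ τ in η..ξ, ∫ s in (0:ℝ)..η, K τ s)
    + 1 / 2 * (∫ τ in (0:ℝ)..η, ∫ s in (0:ℝ)..τ, K τ s)

lemma picardOp_const_mul (c : ℝ) (K : ℝ → ℝ → ℝ) (ξ η : ℝ) :
    picardOp (fun τ s => c * K τ s) ξ η = c * picardOp K ξ η := by
  simp only [picardOp, intervalIntegral.integral_const_mul]
  ring

lemma abs_picardOp_le {K g : ℝ → ℝ → ℝ} (hg : Continuous (uncurry g)) {ξ η : ℝ}
    (hE : (ξ, η) ∈ Eset) (hKg : ∀ τ s, (τ, s) ∈ Eset → |K τ s| ≤ g τ s) :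
    |picardOp K ξ η| ≤ picardOp g ξ η := by
  obtain ⟨hη0, hη1, hηξ, hξ2⟩ := mem_Eset.1 hE
  have hrect := abs_integral_integral_le (f := K) hg continuous_const hηξ (fun _ _ => hη0)
    fun τ hτ s hs => hKg τ s <| mem_Eset.2
      ⟨hs.1.le, hs.2.trans hη1, hs.2.trans hτ.1.le, by linarith [hτ.2, hs.2]⟩
  have htri := abs_integral_integral_le (f := K) hg continuous_id' hη0 (fun τ hτ => hτ.1.le)
    fun τ hτ s hs => hKg τ s <| mem_Eset.2 ⟨hs.1.le, hs.2.trans (hτ.2.trans hη1), hs.2, by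
      linarith [hs.2, hτ.2]⟩
  unfold picardOp
  calc _ ≤ 1 / 4 * |∫ τ in η..ξ, ∫ s in (0:ℝ)..η, K τ s|
        + 1 / 2 * |∫ τ in (0:ℝ)..η, ∫ s in (0:ℝ)..τ, K τ s| := by
          refine (abs_add_le _ _).trans_eq ?_
          rw [abs_mul, abs_mul, abs_of_pos (by norm_num : (0:ℝ) < 1 / 4),
            abs_of_pos (by norm_num : (0:ℝ) < 1 / 2)]
    _ ≤ _ := by gcongr

def majorant (n : ℕ) (τ s : ℝ) : ℝ := τ ^ (n + 1) * s ^ n + τ ^ n * s ^ (n + 1)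

lemma integral_majorant (n : ℕ) (τ b : ℝ) :
    ∫ s in (0:ℝ)..b, majorant n τ s =
      τ ^ (n + 1) * (b ^ (n + 1) / (n + 1)) + τ ^ n * (b ^ (n + 2) / (n + 2)) := by
  simp only [majorant]
  rw [intervalIntegral.integral_add, intervalIntegral.integral_const_mul,
    intervalIntegral.integral_const_mul, integral_pow, integral_pow]
  · push_cast; ring
  all_goals exact (continuous_const.mul (continuous_pow _)).intervalIntegrable _ _

lemma picardOp_majorant (n : ℕ) (ξ η : ℝ) :
    picardOp (majorant n) ξ η = majorant (n + 1) ξ η / (4 * ((n + 1) * (n + 2))) := by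
  have htri : ∀ τ : ℝ, ∫ s in (0:ℝ)..τ, majorant n τ s
      = (1 / (n + 1) + 1 / (n + 2)) * τ ^ (2 * n + 2) := fun τ => by
    rw [integral_majorant]; ring
  simp only [picardOp, integral_majorant, htri]
  rw [intervalIntegral.integral_add, intervalIntegral.integral_mul_const,
    intervalIntegral.integral_mul_const, integral_pow, integral_pow,
    intervalIntegral.integral_const_mul, integral_pow]
  · push_cast
    field_simp
    simp only [majorant]
    ring
  all_goals exact ((continuous_pow _).mul continuous_const).intervalIntegrable _ _

lemma majorant_nonneg (n : ℕ) {τ s : ℝ} (hτ : 0 ≤ τ) (hs : 0 ≤ s) : 0 ≤ majorant n τ s := by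
  unfold majorant; positivity

lemma abs_picardOp_le_majorant {K : ℝ → ℝ → ℝ} {c ξ η : ℝ} (n : ℕ) (hE : (ξ, η) ∈ Eset)
    (hK : ∀ τ s, (τ, s) ∈ Eset → |K τ s| ≤ c * majorant n τ s) :
    |picardOp K ξ η| ≤ c / (4 * ((n + 1) * (n + 2))) * majorant (n + 1) ξ η := by
  have h := abs_picardOp_le (by unfold majorant; fun_prop) hE hK
  rw [picardOp_const_mul, picardOp_majorant] at h
  exact h.trans_eq (by ring)

lemma abs_sub_mul_le_of_mem_Eset {r lam0 τ s : ℝ} (hr : 0 ≤ r) (h : (τ, s) ∈ Eset) :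
    |lam0 - r * τ * s| ≤ r + |lam0| := by
  obtain ⟨hs0, hs1, hsτ, hτ2⟩ := mem_Eset.1 h
  have hτs : 0 ≤ τ * s := mul_nonneg (hs0.trans hsτ) hs0
  -- `τ s ≤ (2 - s) s = 1 - (1 - s)²`
  have hτs1 : τ * s ≤ 1 := by nlinarith
  calc |lam0 - r * τ * s| ≤ |lam0| + |r * (τ * s)| := by rw [mul_assoc]; exact abs_sub _ _
    _ ≤ |lam0| + r := by
        rw [abs_of_nonneg (mul_nonneg hr hτs)]
        linarith [mul_le_of_le_one_right hr hτs1]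
    _ = r + |lam0| := add_comm _ _

lemma div_factorial_div_le (M : ℝ) (hM : 0 ≤ M) (n : ℕ) :
    M / (n + 1).factorial / (4 * ((n + 1) * (n + 2))) ≤ M / (n + 2).factorial := by
  rw [div_div]
  refine div_le_div_of_nonneg_left hM (by positivity) ?_
  rw [Nat.factorial_succ (n + 1)]
  push_cast
  rw [mul_comm]
  exact mul_le_mul_of_nonneg_left (by nlinarith [n.cast_nonneg (α := ℝ)]) (Nat.cast_nonneg _)

theorem stmt18 (r lam0 : ℝ) (hr : 0 ≤ r)
    (G : ℕ → ℝ → ℝ → ℝ)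
    (hG0 : ∀ ξ η : ℝ, G 0 ξ η = lam0 / 4 * (ξ + η))
    (hGrec : ∀ n : ℕ, ∀ ξ η : ℝ, G (n + 1) ξ η =
      (1 / 4) * (∫ τ in η..ξ, ∫ s in (0:ℝ)..η, (lam0 - r * τ * s) * G n τ s)
        + (1 / 2) * (∫ τ in (0:ℝ)..η, ∫ s in (0:ℝ)..τ, (lam0 - r * τ * s) * G n τ s))
    (M₁ : ℝ) (hM₁ : M₁ = r + |lam0|) :
    ∀ n : ℕ, ∀ ξ η : ℝ, (ξ, η) ∈ Eset →
      |G n ξ η| ≤ M₁ ^ (n + 1) / (Nat.factorial (n + 1) : ℝ) *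
        (ξ ^ (n + 1) * η ^ n + ξ ^ n * η ^ (n + 1)) := by
  have hM₁0 : 0 ≤ M₁ := hM₁ ▸ by positivity
  intro n
  induction n with
  | zero =>
    intro ξ η hE
    obtain ⟨hη0, -, hηξ, -⟩ := mem_Eset.1 hE
    rw [hG0, abs_mul, abs_div, abs_of_nonneg (by linarith : 0 ≤ ξ + η)]
    norm_num
    nlinarith [abs_nonneg lam0]
  | succ n ih =>
    intro ξ η hE
    obtain ⟨hη0, -, hηξ, -⟩ := mem_Eset.1 hE
    have hK : ∀ τ s, (τ, s) ∈ Eset → |(lam0 - r * τ * s) * G n τ s|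
        ≤ M₁ ^ (n + 2) / (n + 1).factorial * majorant n τ s := fun τ s hτs =>
      calc |(lam0 - r * τ * s) * G n τ s|
          ≤ M₁ * (M₁ ^ (n + 1) / (n + 1).factorial * majorant n τ s) := by
            rw [abs_mul]
            exact mul_le_mul (hM₁ ▸ abs_sub_mul_le_of_mem_Eset hr hτs) (ih τ s hτs)
              (abs_nonneg _) hM₁0
        _ = M₁ ^ (n + 2) / (n + 1).factorial * majorant n τ s := by ring
    rw [hGrec]
    refine (abs_picardOp_le_majorant n hE hK).trans ?_
    exact mul_le_mul_of_nonneg_right (div_factorial_div_le _ (pow_nonneg hM₁0 _) n)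
      (majorant_nonneg _ (hη0.trans hηξ) hη0)
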